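/- arXiv:0804.3003 — 7 statements merged into one kernel-verified Lean document; each statement's English description precedes it below -/
import Mathlib

section
/- Let X, T, B7 be the vector fields on ℝ³ (coordinates (x,t,u)) given by X(x,t,u)=(1,0,0), T(x,t,u)=(0,1,0), B7(x,t,u)=(x+t, 2t, 1+u), and set h1 := X, h2 := T+X, h3 := B7. Then, at every point of ℝ³, [h1,h3]=h1, [h2,h3]=2·h2 and [h1,h2]=0. (This exhibits the isomorphism of the symmetry Lie algebra of the case g(u)=u/(1+u) with that of the case g(u)=u^p: both have a basis e1,e2,e3 with [e1,e3]=e1, [e2,e3]=2e2 and all other brackets zero.) -/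
/-!
`h1` and `h2` are constant fields, so they commute, and `h3 = B7` is affine, `h3 q = A q + b`.
The bracket of a constant field `c` with an affine field is the constant field `A c`, and
`(1, 0, 0)`, `(1, 1, 0)` are eigenvectors of the linear part `A` with eigenvalues `1` and `2`.
-/

namespace VectorField

variable {𝕜 E : Type*} [NontriviallyNormedField 𝕜] [NormedAddCommGroup E] [NormedSpace 𝕜 E]

theorem lieBracket_const_left (c : E) (W : E → E) (x : E) :
    lieBracket 𝕜 (fun _ => c) W x = fderiv 𝕜 W x c := by
  simp [lieBracket_eq]

theorem lieBracket_const_const (c d : E) : lieBracket 𝕜 (fun _ : E => c) (fun _ => d) = 0 := by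
  ext1 x
  simp [lieBracket_const_left]

theorem lieBracket_const_affine (c b : E) (A : E →L[𝕜] E) (x : E) :
    lieBracket 𝕜 (fun _ => c) (fun y => A y + b) x = A c := by
  rw [lieBracket_const_left, (A.hasFDerivAt.add_const b).fderiv]

end VectorField

open VectorField

noncomputable def b7LinearPart : (ℝ × ℝ × ℝ) →L[ℝ] (ℝ × ℝ × ℝ) :=
  (ContinuousLinearMap.fst ℝ ℝ (ℝ × ℝ) +
      (ContinuousLinearMap.fst ℝ ℝ ℝ).comp (ContinuousLinearMap.snd ℝ ℝ (ℝ × ℝ))).prod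
    (((2 : ℝ) • (ContinuousLinearMap.fst ℝ ℝ ℝ).comp (ContinuousLinearMap.snd ℝ ℝ (ℝ × ℝ))).prod
      ((ContinuousLinearMap.snd ℝ ℝ ℝ).comp (ContinuousLinearMap.snd ℝ ℝ (ℝ × ℝ))))

theorem b7LinearPart_apply (q : ℝ × ℝ × ℝ) :
    b7LinearPart q = (q.1 + q.2.1, 2 * q.2.1, q.2.2) := by
  simp [b7LinearPart]

/-- Normal form of the symmetry Lie algebra of `ν·u_xx = u_t + (u/(1+u))·u_x`:
with `h1 = X`, `h2 = T + X`, `h3 = B7`, the only nonzero brackets are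
`[h1, h3] = h1` and `[h2, h3] = 2 h2`. Coordinates on `ℝ³` are `(x, t, u)`. -/
theorem burgers_lie_algebra_g7_normal_form
    (X T B7 : ℝ × ℝ × ℝ → ℝ × ℝ × ℝ)
    (hX : X = fun _ => (1, 0, 0))
    (hT : T = fun _ => (0, 1, 0))
    (hB7 : B7 = fun q => (q.1 + q.2.1, 2 * q.2.1, 1 + q.2.2))
    (h1 h2 h3 : ℝ × ℝ × ℝ → ℝ × ℝ × ℝ)
    (hh1 : h1 = X) (hh2 : h2 = T + X) (hh3 : h3 = B7) :
    ∀ q : ℝ × ℝ × ℝ,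
      VectorField.lieBracket ℝ h1 h3 q = h1 q ∧
      VectorField.lieBracket ℝ h2 h3 q = (2 : ℝ) • h2 q ∧
      VectorField.lieBracket ℝ h1 h2 q = 0 := by
  have h2_const : h2 = fun _ => (1, 1, 0) := by
    ext <;> simp [hh2, hT, hX]
  have h3_affine : h3 = fun q => b7LinearPart q + (0, 0, 1) := by
    ext q <;> simp [hh3, hB7, b7LinearPart_apply, add_comm]
  intro q
  subst hh1 hX
  rw [h2_const, h3_affine, lieBracket_const_affine, lieBracket_const_affine,
    lieBracket_const_const]
  refine ⟨?_, ?_, rfl⟩ <;> ext <;> norm_num [b7LinearPart_apply]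
end

section
/- Let ν > 0 and let u be a solution of the Burgers equation with flux g(u) = u, i.e. ν·u_xx = u_t + u·u_x. Fix a real ε and define, for all (x,t) with 1 + ε·t ≠ 0, v x t := (u (x/(1+ε·t)) (t/(1+ε·t)) + ε·x) / (1+ε·t). Then at every point (x,t) with 1 + ε·t ≠ 0 the function v satisfies ν·∂ₓ(∂ₓ v) x t = ∂ₜ v x t + (v x t)·∂ₓ v x t. (This is the finite projective transformation generated by B11 = t·x·∂/∂x + t²·∂/∂t + (x − t·u)·∂/∂u.) -/
set_option maxHeartbeats 1000000


/-- `u : ℝ → ℝ → ℝ`, written `u x t`, is a solution of the Burgers equation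
`ν·u_xx = u_t + g(u)·u_x` with viscosity `ν` and flux `g` if it is smooth
as a function of the pair `(x, t)` and satisfies the equation at every point.
Here `∂ₓ` is the derivative in the first (space) variable and `∂ₜ` the
derivative in the second (time) variable. -/
def IsBurgersSolution (ν : ℝ) (g : ℝ → ℝ) (u : ℝ → ℝ → ℝ) : Prop :=
  ContDiff ℝ (⊤ : ℕ∞) (fun q : ℝ × ℝ => u q.1 q.2) ∧
  ∀ x t : ℝ,
    ν * deriv (fun x' => deriv (fun x'' => u x'' t) x') x =
      deriv (fun t' => u x t') t + g (u x t) * deriv (fun x' => u x' t) x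

/-- Projective symmetry of the Burgers equation with flux `g(u) = u`
(generated by `B11 = t·x·∂/∂x + t²·∂/∂t + (x − t·u)·∂/∂u`): if `u` solves
`ν·u_xx = u_t + u·u_x` and `v x t = (u (x/(1+ε·t)) (t/(1+ε·t)) + ε·x)/(1+ε·t)`
wherever `1 + ε·t ≠ 0`, then `v` satisfies the equation at every such point. -/
theorem burgers_projective_symmetry
    (ν : ℝ) (hν : 0 < ν) (u : ℝ → ℝ → ℝ)
    (hu : IsBurgersSolution ν (fun s => s) u) (ε : ℝ)
    (v : ℝ → ℝ → ℝ)
    (hv : ∀ x t : ℝ, 1 + ε * t ≠ 0 →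
      v x t = (u (x / (1 + ε * t)) (t / (1 + ε * t)) + ε * x) / (1 + ε * t)) :
    ∀ x t : ℝ, 1 + ε * t ≠ 0 →
      ν * deriv (fun x' => deriv (fun x'' => v x'' t) x') x =
        deriv (fun t' => v x t') t + v x t * deriv (fun x' => v x' t) x := by
  obtain ⟨hU, heq⟩ := hu
  set U : ℝ × ℝ → ℝ := fun q => u q.1 q.2 with hUdef
  have hUd : Differentiable ℝ U := hU.differentiable (by simp)
  set A : ℝ × ℝ → ℝ := fun q => fderiv ℝ U q (1, 0) with hAdef
  set B : ℝ × ℝ → ℝ := fun q => fderiv ℝ U q (0, 1) with hBdef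
  have hAc : ContDiff ℝ (⊤ : ℕ∞) A := (hU.fderiv_right (by simp)).clm_apply contDiff_const
  have hAd : Differentiable ℝ A := hAc.differentiable (by simp)
  set C : ℝ × ℝ → ℝ := fun q => fderiv ℝ A q (1, 0) with hCdef
  have L1 : ∀ x t : ℝ, HasDerivAt (fun x' => u x' t) (A (x, t)) x := by
    intro x t
    have h1 : HasDerivAt (fun x' : ℝ => (x', t)) ((1 : ℝ), (0 : ℝ)) x :=
      HasDerivAt.prodMk (hasDerivAt_id x) (hasDerivAt_const x t)
    exact (hUd (x, t)).hasFDerivAt.comp_hasDerivAt x h1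
  have L2 : ∀ x t : ℝ, HasDerivAt (fun t' => u x t') (B (x, t)) t := by
    intro x t
    have h1 : HasDerivAt (fun t' : ℝ => (x, t')) ((0 : ℝ), (1 : ℝ)) t :=
      HasDerivAt.prodMk (hasDerivAt_const t x) (hasDerivAt_id t)
    exact (hUd (x, t)).hasFDerivAt.comp_hasDerivAt t h1
  have L3 : ∀ x t : ℝ, HasDerivAt (fun x' => A (x', t)) (C (x, t)) x := by
    intro x t
    have h1 : HasDerivAt (fun x' : ℝ => (x', t)) ((1 : ℝ), (0 : ℝ)) x :=
      HasDerivAt.prodMk (hasDerivAt_id x) (hasDerivAt_const x t)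
    exact (hAd (x, t)).hasFDerivAt.comp_hasDerivAt x h1
  have key : ∀ x t : ℝ, ν * C (x, t) = B (x, t) + u x t * A (x, t) := by
    intro x t
    have h1 : (fun x' => deriv (fun x'' => u x'' t) x') = fun x' => A (x', t) :=
      funext fun x' => (L1 x' t).deriv
    have h2 := heq x t
    rw [h1] at h2
    rw [(L3 x t).deriv, (L2 x t).deriv, (L1 x t).deriv] at h2
    exact h2
  intro x t hs
  set s : ℝ := 1 + ε * t with hsdef
  set P : ℝ × ℝ := (x / s, t / s) with hPdef
  -- spatial derivative of v
  have hvxf : (fun x' => v x' t) = fun x' => (u (x' / s) (t / s) + ε * x') / s :=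
    funext fun x' => hv x' t hs
  have hx1 : ∀ y : ℝ, HasDerivAt (fun x' => (u (x' / s) (t / s) + ε * x') / s)
      ((A (y / s, t / s) * (1 / s) + ε * 1) / s) y := by
    intro y
    have h1 : HasDerivAt (fun x' : ℝ => x' / s) (1 / s) y := by
      simpa using (hasDerivAt_id y).div_const s
    have h2 := (L1 (y / s) (t / s)).comp y h1
    exact (h2.add ((hasDerivAt_id y).const_mul ε)).div_const s
  have hvx : deriv (fun x' => v x' t) x = (A P * (1 / s) + ε * 1) / s := by
    rw [hvxf]; exact (hx1 x).deriv
  -- second spatial derivative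
  have hvxx : deriv (fun x' => deriv (fun x'' => v x'' t) x') x
      = C P * (1 / s) * (1 / s) / s := by
    have h1 : (fun x' => deriv (fun x'' => v x'' t) x')
        = fun x' => (A (x' / s, t / s) * (1 / s) + ε * 1) / s := by
      funext y
      rw [hvxf]; exact (hx1 y).deriv
    rw [h1]
    have h2 : HasDerivAt (fun x' : ℝ => x' / s) (1 / s) x := by
      simpa using (hasDerivAt_id x).div_const s
    have h3 := (L3 (x / s) (t / s)).comp x h2
    have h4 : HasDerivAt (fun x' => (A (x' / s, t / s) * (1 / s) + ε * 1) / s)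
        (C P * (1 / s) * (1 / s) / s) x := by
      exact ((h3.mul_const (1 / s)).add_const (ε * 1)).div_const s
    exact h4.deriv
  -- time derivative
  have hopen : IsOpen {t' : ℝ | 1 + ε * t' ≠ 0} := by
    have hc : Continuous fun t' : ℝ => 1 + ε * t' := by continuity
    exact isOpen_compl_singleton.preimage hc
  have hst : (fun t' => v x t') =ᶠ[nhds t]
      fun t' => (u (x / (1 + ε * t')) (t' / (1 + ε * t')) + ε * x) / (1 + ε * t') := by
    filter_upwards [hopen.mem_nhds hs] with t' ht' using hv x t' ht'
  have hden : HasDerivAt (fun t' : ℝ => 1 + ε * t') ε t := by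
    simpa using ((hasDerivAt_id t).const_mul ε).const_add 1
  have hγ1 : HasDerivAt (fun t' => x / (1 + ε * t')) ((0 * s - x * ε) / s ^ 2) t :=
    (hasDerivAt_const t x).div hden hs
  have hγ2 : HasDerivAt (fun t' => t' / (1 + ε * t')) ((1 * s - t * ε) / s ^ 2) t :=
    (hasDerivAt_id t).div hden hs
  have hγ := HasDerivAt.prodMk hγ1 hγ2
  have hUc := (hUd P).hasFDerivAt.comp_hasDerivAt t hγ
  have hlin : fderiv ℝ U P ((0 * s - x * ε) / s ^ 2, (1 * s - t * ε) / s ^ 2)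
      = ((0 * s - x * ε) / s ^ 2) * A P + ((1 * s - t * ε) / s ^ 2) * B P := by
    have hpt : ((0 * s - x * ε) / s ^ 2, (1 * s - t * ε) / s ^ 2)
        = ((0 * s - x * ε) / s ^ 2) • ((1 : ℝ), (0 : ℝ))
          + ((1 * s - t * ε) / s ^ 2) • ((0 : ℝ), (1 : ℝ)) := by
      simp [Prod.ext_iff]
    rw [hpt, map_add, map_smul, map_smul, hAdef, hBdef, smul_eq_mul, smul_eq_mul]
  have hvt : deriv (fun t' => v x t')
      t = ((((0 * s - x * ε) / s ^ 2) * A P + ((1 * s - t * ε) / s ^ 2) * B P) * s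
          - (u (x / s) (t / s) + ε * x) * ε) / s ^ 2 := by
    rw [hst.deriv_eq]
    have hN : HasDerivAt (fun t' => u (x / (1 + ε * t')) (t' / (1 + ε * t')) + ε * x)
        (((0 * s - x * ε) / s ^ 2) * A P + ((1 * s - t * ε) / s ^ 2) * B P) t := by
      have := hUc.add_const (ε * x)
      rw [hlin] at this
      simpa [Function.comp] using this
    have := hN.div hden hs
    exact this.deriv
  rw [hvxx, hvt, hvx, hv x t hs, hPdef, ← hsdef]
  have hk := key (x / s) (t / s)
  clear_value s
  have hts : t * ε = s - 1 := by rw [hsdef]; ring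
  field_simp
  linear_combination hk + B (x / s, t / s) * hts
end

section
/- Let ν > 0 and let u be a solution of the Burgers equation with flux g(u) = log u, with u x t > 0 for all (x,t). Then for every real μ > 0, the function v defined by v x t := μ · u (x − (log μ)·t) t is smooth, everywhere positive, and is again a solution of the Burgers equation with flux g(u) = log u. (This is the finite transformation generated by B3 = t·∂/∂x + u·∂/∂u.) -/
private lemma hasDerivAt_x (f : ℝ × ℝ → ℝ) (hf : Differentiable ℝ f) (x t : ℝ) :
    HasDerivAt (fun x' => f (x', t)) (fderiv ℝ f (x, t) (1, 0)) x := by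
  have hc : HasDerivAt (fun x' : ℝ => ((x', t) : ℝ × ℝ)) ((1, 0) : ℝ × ℝ) x :=
    (hasDerivAt_id x).prodMk (hasDerivAt_const x t)
  exact (hf (x, t)).hasFDerivAt.comp_hasDerivAt x hc

private lemma hasDerivAt_t (f : ℝ × ℝ → ℝ) (hf : Differentiable ℝ f) (x t : ℝ) :
    HasDerivAt (fun t' => f (x, t')) (fderiv ℝ f (x, t) (0, 1)) t := by
  have hc : HasDerivAt (fun t' : ℝ => ((x, t') : ℝ × ℝ)) ((0, 1) : ℝ × ℝ) t :=
    (hasDerivAt_const t x).prodMk (hasDerivAt_id t)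
  exact (hf (x, t)).hasFDerivAt.comp_hasDerivAt t hc

private lemma hasDerivAt_xshift (f : ℝ × ℝ → ℝ) (hf : Differentiable ℝ f) (c x t : ℝ) :
    HasDerivAt (fun x' => f (x' - c * t, t)) (fderiv ℝ f (x - c * t, t) (1, 0)) x := by
  have hc : HasDerivAt (fun x' : ℝ => ((x' - c * t, t) : ℝ × ℝ)) ((1, 0) : ℝ × ℝ) x :=
    ((hasDerivAt_id x).sub_const (c * t)).prodMk (hasDerivAt_const x t)
  exact (hf (x - c * t, t)).hasFDerivAt.comp_hasDerivAt x hc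

private lemma hasDerivAt_tshift (f : ℝ × ℝ → ℝ) (hf : Differentiable ℝ f) (c x t : ℝ) :
    HasDerivAt (fun t' => f (x - c * t', t')) (fderiv ℝ f (x - c * t, t) (-c, 1)) t := by
  have hc : HasDerivAt (fun t' : ℝ => ((x - c * t', t') : ℝ × ℝ)) ((-c, 1) : ℝ × ℝ) t := by
    have h1 : HasDerivAt (fun t' : ℝ => x - c * t') (-c) t := by
      simpa using ((hasDerivAt_id t).const_mul c).const_sub x
    exact h1.prodMk (hasDerivAt_id t)
  exact (hf (x - c * t, t)).hasFDerivAt.comp_hasDerivAt_of_eq t hc rfl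

/-- Symmetry of the Burgers equation with flux `g(u) = log u` generated by
`B3 = t·∂/∂x + u·∂/∂u`: if `u` is a positive solution and `μ > 0`, then
`v x t = μ·u (x − (log μ)·t) t` is positive and again a solution. -/
theorem burgers_log_symmetry
    (ν : ℝ) (hν : 0 < ν)
    (u : ℝ → ℝ → ℝ) (hu : IsBurgersSolution ν Real.log u)
    (hupos : ∀ x t : ℝ, 0 < u x t) (μ : ℝ) (hμ : 0 < μ)
    (v : ℝ → ℝ → ℝ) (hv : v = fun x t => μ * u (x - Real.log μ * t) t) :
    (∀ x t : ℝ, 0 < v x t) ∧ IsBurgersSolution ν Real.log v := by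
  subst hv
  set c : ℝ := Real.log μ with hc
  set U : ℝ × ℝ → ℝ := fun q => u q.1 q.2 with hUdef
  have hU : ContDiff ℝ (⊤ : ℕ∞) U := hu.1
  have hUd : Differentiable ℝ U := hU.differentiable (by simp)
  set px : ℝ × ℝ → ℝ := fun q => fderiv ℝ U q (1, 0) with hpxdef
  set pt : ℝ × ℝ → ℝ := fun q => fderiv ℝ U q (0, 1) with hptdef
  have hpx : ContDiff ℝ (⊤ : ℕ∞) px := (hU.fderiv_right (by simp)).clm_apply contDiff_const
  have hpxd : Differentiable ℝ px := hpx.differentiable (by simp)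
  set pxx : ℝ × ℝ → ℝ := fun q => fderiv ℝ px q (1, 0) with hpxxdef
  -- basic partial derivative facts
  have dx : ∀ x t : ℝ, HasDerivAt (fun x' => u x' t) (px (x, t)) x := fun x t =>
    hasDerivAt_x U hUd x t
  have dt : ∀ x t : ℝ, HasDerivAt (fun t' => u x t') (pt (x, t)) t := fun x t =>
    hasDerivAt_t U hUd x t
  have dxx : ∀ x t : ℝ, HasDerivAt (fun x' => px (x', t)) (pxx (x, t)) x := fun x t =>
    hasDerivAt_x px hpxd x t
  -- rewrite the PDE for u
  have heq : ∀ x t : ℝ, ν * pxx (x, t) = pt (x, t) + Real.log (u x t) * px (x, t) := by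
    intro x t
    have h := hu.2 x t
    have hinner : (fun x' => deriv (fun x'' => u x'' t) x') = fun x' => px (x', t) :=
      funext fun x' => (dx x' t).deriv
    rw [hinner, (dxx x t).deriv, (dt x t).deriv, (dx x t).deriv] at h
    exact h
  refine ⟨fun x t => mul_pos hμ (hupos _ _), ?_, ?_⟩
  · -- smoothness of v
    have hmap : ContDiff ℝ (⊤ : ℕ∞) (fun q : ℝ × ℝ => ((q.1 - c * q.2, q.2) : ℝ × ℝ)) :=
      (contDiff_fst.sub (contDiff_const.mul contDiff_snd)).prodMk contDiff_snd
    exact contDiff_const.mul (hU.comp hmap)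
  · intro x t
    -- derivatives of v
    have dvx : ∀ x t : ℝ,
        HasDerivAt (fun x' => μ * u (x' - c * t) t) (μ * px (x - c * t, t)) x := by
      intro x t
      exact (hasDerivAt_xshift U hUd c x t).const_mul μ
    have hinner : (fun x' => deriv (fun x'' => μ * u (x'' - c * t) t) x')
        = fun x' => μ * px (x' - c * t, t) :=
      funext fun x' => (dvx x' t).deriv
    have dvxx : HasDerivAt (fun x' => μ * px (x' - c * t, t)) (μ * pxx (x - c * t, t)) x :=
      (hasDerivAt_xshift px hpxd c x t).const_mul μ
    have dvt : HasDerivAt (fun t' => μ * u (x - c * t') t')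
        (μ * (-c * px (x - c * t, t) + pt (x - c * t, t))) t := by
      have h := (hasDerivAt_tshift U hUd c x t).const_mul μ
      have hvec : ((-c, 1) : ℝ × ℝ) = (-c) • ((1, 0) : ℝ × ℝ) + ((0, 1) : ℝ × ℝ) := by
        simp [Prod.ext_iff]
      rw [hvec, map_add, map_smul, smul_eq_mul] at h
      exact h
    rw [hinner, dvxx.deriv, dvt.deriv, (dvx x t).deriv]
    have hlog : Real.log (μ * u (x - c * t) t) = c + Real.log (u (x - c * t) t) :=
      Real.log_mul (ne_of_gt hμ) (ne_of_gt (hupos _ _))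
    rw [hlog]
    have h := heq (x - c * t) t
    ring_nf
    nlinarith [h]
end

section
/- Let ν > 0, fix a real b ≠ 0, and let u be a solution of the Burgers equation with flux g(u) = exp(b·u). Then for every real λ > 0, the function v defined by v x t := u (x/λ) (t/λ²) − (log λ)/b is smooth and is again a solution of the Burgers equation with flux g(u) = exp(b·u). (This is the finite transformation generated by B4 = x·∂/∂x + 2t·∂/∂t − (1/b)·∂/∂u.) -/
/-- Symmetry of the Burgers equation with flux `g(u) = exp (b·u)` (`b ≠ 0`)
generated by `B4 = x·∂/∂x + 2t·∂/∂t − (1/b)·∂/∂u`: if `u` is a solution and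
`λ > 0`, then `v x t = u (x/λ) (t/λ²) − (log λ)/b` is again a solution. -/
theorem burgers_exp_symmetry
    (ν : ℝ) (hν : 0 < ν) (b : ℝ) (hb : b ≠ 0)
    (u : ℝ → ℝ → ℝ) (hu : IsBurgersSolution ν (fun s => Real.exp (b * s)) u)
    (l : ℝ) (hl : 0 < l)
    (v : ℝ → ℝ → ℝ)
    (hv : v = fun x t => u (x / l) (t / l ^ 2) - Real.log l / b) :
    IsBurgersSolution ν (fun s => Real.exp (b * s)) v := by
  obtain ⟨hU, heq⟩ := hu
  have hl0 : l ≠ 0 := ne_of_gt hl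
  have hl2 : (l : ℝ) ^ 2 ≠ 0 := pow_ne_zero 2 hl0
  -- smoothness of partial functions
  have hx : ∀ t : ℝ, ContDiff ℝ (⊤ : ℕ∞) (fun y => u y t) := fun t =>
    hU.comp (contDiff_id.prodMk contDiff_const)
  have ht : ∀ x : ℝ, ContDiff ℝ (⊤ : ℕ∞) (fun s => u x s) := fun x =>
    hU.comp (contDiff_const.prodMk contDiff_id)
  -- first space derivative of v
  have hvx : ∀ x t : ℝ, HasDerivAt (fun x' => v x' t)
      (deriv (fun y => u y (t / l ^ 2)) (x / l) * (1 / l)) x := by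
    intro x t
    have h1 : HasDerivAt (fun x' : ℝ => x' / l) (1 / l) x :=
      (hasDerivAt_id x).div_const l
    have h2 : HasDerivAt (fun y => u y (t / l ^ 2))
        (deriv (fun y => u y (t / l ^ 2)) (x / l)) (x / l) :=
      ((hx (t / l ^ 2)).differentiable (by simp) (x / l)).hasDerivAt
    have := (h2.comp x h1).sub_const (Real.log l / b)
    simpa [hv, Function.comp] using this
  -- time derivative of v
  have hvt : ∀ x t : ℝ, HasDerivAt (fun t' => v x t')
      (deriv (fun s => u (x / l) s) (t / l ^ 2) * (1 / l ^ 2)) t := by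
    intro x t
    have h1 : HasDerivAt (fun t' : ℝ => t' / l ^ 2) (1 / l ^ 2) t :=
      (hasDerivAt_id t).div_const (l ^ 2)
    have h2 : HasDerivAt (fun s => u (x / l) s)
        (deriv (fun s => u (x / l) s) (t / l ^ 2)) (t / l ^ 2) :=
      ((ht (x / l)).differentiable (by simp) (t / l ^ 2)).hasDerivAt
    have := (h2.comp t h1).sub_const (Real.log l / b)
    simpa [hv, Function.comp] using this
  constructor
  · rw [hv]
    exact (hU.comp ((contDiff_fst.div_const l).prodMk
      (contDiff_snd.div_const (l ^ 2)))).sub contDiff_const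
  intro x t
  set T := t / l ^ 2 with hT
  -- derivative of deriv in x
  have hdx : (fun x' => deriv (fun x'' => v x'' t) x') =
      fun x' => deriv (fun y => u y T) (x' / l) * (1 / l) := by
    funext x'
    exact (hvx x' t).deriv
  have hdd := (contDiff_infty_iff_deriv.mp ((hx T).of_le (by simp))).2
  have h2nd : HasDerivAt (fun x' => deriv (fun x'' => v x'' t) x')
      (deriv (fun y => deriv (fun z => u z T) y) (x / l) * (1 / l) * (1 / l)) x := by
    rw [hdx]
    have h1 : HasDerivAt (fun x' : ℝ => x' / l) (1 / l) x :=
      (hasDerivAt_id x).div_const l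
    have h2 : HasDerivAt (deriv (fun y => u y T))
        (deriv (fun y => deriv (fun z => u z T) y) (x / l)) (x / l) :=
      (hdd.differentiable (by simp) (x / l)).hasDerivAt
    have := (h2.comp x h1).mul_const (1 / l)
    simpa [Function.comp, mul_comm, mul_assoc, mul_left_comm] using this
  rw [h2nd.deriv, (hvt x t).deriv, (hvx x t).deriv]
  have hvval : v x t = u (x / l) T - Real.log l / b := by rw [hv]
  rw [hvval]
  have hexp : Real.exp (b * (u (x / l) T - Real.log l / b)) =
      Real.exp (b * u (x / l) T) / l := by
    rw [mul_sub, mul_div_cancel₀ _ hb, Real.exp_sub, Real.exp_log hl]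
  simp only [hexp]
  have := heq (x / l) T
  simp only [← hT]
  field_simp
  linear_combination this
end

section
/- Let ν > 0 and let u be a solution of the Burgers equation with flux g(u) = (1−u)/(1+u), with 1 + u x t ≠ 0 for all (x,t). Then for every real λ > 0, the function v defined by v x t := λ·(1 + u (x/λ + (1/λ − 1/λ²)·t) (t/λ²)) − 1 is smooth, satisfies 1 + v x t ≠ 0 everywhere, and is again a solution of the Burgers equation with flux g(u) = (1−u)/(1+u). (This is the finite transformation generated by B5 = (x−t)·∂/∂x + 2t·∂/∂t + (1+u)·∂/∂u.) -/
/-- Symmetry of the Burgers equation with flux `g(u) = (1−u)/(1+u)`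
generated by `B5 = (x−t)·∂/∂x + 2t·∂/∂t + (1+u)·∂/∂u`: if `u` is a solution
with `1 + u ≠ 0` everywhere and `λ > 0`, then
`v x t = λ·(1 + u (x/λ + (1/λ − 1/λ²)·t) (t/λ²)) − 1` satisfies `1 + v ≠ 0`
everywhere and is again a solution. -/
theorem burgers_g5_symmetry
    (ν : ℝ) (hν : 0 < ν)
    (u : ℝ → ℝ → ℝ) (hu : IsBurgersSolution ν (fun s => (1 - s) / (1 + s)) u)
    (hune : ∀ x t : ℝ, 1 + u x t ≠ 0) (l : ℝ) (hl : 0 < l)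
    (v : ℝ → ℝ → ℝ)
    (hv : v = fun x t =>
      l * (1 + u (x / l + (1 / l - 1 / l ^ 2) * t) (t / l ^ 2)) - 1) :
    (∀ x t : ℝ, 1 + v x t ≠ 0) ∧
      IsBurgersSolution ν (fun s => (1 - s) / (1 + s)) v := by
  obtain ⟨husm, hpde⟩ := hu
  have hl0 : l ≠ 0 := ne_of_gt hl
  have hl20 : l ^ 2 ≠ 0 := pow_ne_zero 2 hl0
  set c : ℝ := 1 / l - 1 / l ^ 2 with hc
  set U : ℝ × ℝ → ℝ := fun q => u q.1 q.2 with hU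
  have hUd : Differentiable ℝ U := husm.differentiable (by simp)
  set F : ℝ × ℝ → (ℝ × ℝ) →L[ℝ] ℝ := fun p => fderiv ℝ U p with hF
  have hFsm : ContDiff ℝ (⊤ : ℕ∞) F := husm.fderiv_right (by simp)
  -- space partial derivative
  have hx : ∀ a b : ℝ, HasDerivAt (fun x' => u x' b) (F (a, b) (1, 0)) a := by
    intro a b
    have h1 : HasDerivAt (fun x' : ℝ => ((x', b) : ℝ × ℝ)) ((1 : ℝ), (0 : ℝ)) a :=
      (hasDerivAt_id a).prodMk (hasDerivAt_const a b)
    exact (hUd (a, b)).hasFDerivAt.comp_hasDerivAt a h1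
  -- time partial derivative
  have ht : ∀ a b : ℝ, HasDerivAt (fun t' => u a t') (F (a, b) (0, 1)) b := by
    intro a b
    have h1 : HasDerivAt (fun t' : ℝ => ((a, t') : ℝ × ℝ)) ((0 : ℝ), (1 : ℝ)) b :=
      (hasDerivAt_const b a).prodMk (hasDerivAt_id b)
    exact (hUd (a, b)).hasFDerivAt.comp_hasDerivAt b h1
  -- G b is the space partial derivative function
  set G : ℝ → ℝ → ℝ := fun b y => F (y, b) (1, 0) with hG
  have hGd : ∀ b : ℝ, Differentiable ℝ (G b) := by
    intro b
    have h1 : ContDiff ℝ (⊤ : ℕ∞) (fun y : ℝ => F (y, b)) :=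
      hFsm.comp (contDiff_id.prodMk contDiff_const)
    exact (h1.clm_apply contDiff_const).differentiable (by simp)
  have hGderiv : ∀ b : ℝ, (fun y => deriv (fun x'' => u x'' b) y) = G b := by
    intro b; funext y; exact (hx y b).deriv
  -- rewrite the PDE for u in terms of F and G
  have hpde' : ∀ a b : ℝ,
      ν * deriv (G b) a =
        F (a, b) (0, 1) + (1 - u a b) / (1 + u a b) * F (a, b) (1, 0) := by
    intro a b
    have := hpde a b
    rw [show (fun x' => deriv (fun x'' => u x'' b) x') = G b from hGderiv b,
      (ht a b).deriv, (hx a b).deriv] at this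
    exact this
  -- nonvanishing of 1 + v
  have hvne : ∀ x t : ℝ, 1 + v x t ≠ 0 := by
    intro x t
    rw [hv]
    simp only
    intro h
    have h2 : l * (1 + u (x / l + c * t) (t / l ^ 2)) = 0 := by linarith
    rcases mul_eq_zero.mp h2 with h3 | h3
    · exact hl0 h3
    · exact hune _ _ h3
  refine ⟨hvne, ?_, ?_⟩
  · -- smoothness of v
    have hA : ContDiff ℝ (⊤ : ℕ∞) (fun q : ℝ × ℝ =>
        ((q.1 / l + c * q.2, q.2 / l ^ 2) : ℝ × ℝ)) :=
      ((contDiff_fst.div_const l).add (contDiff_const.mul contDiff_snd)).prodMk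
        (contDiff_snd.div_const (l ^ 2))
    have : ContDiff ℝ (⊤ : ℕ∞) (fun q : ℝ × ℝ =>
        l * (1 + U (q.1 / l + c * q.2, q.2 / l ^ 2)) - 1) :=
      (contDiff_const.mul (contDiff_const.add (husm.comp hA))).sub contDiff_const
    rw [hv]
    exact this
  · -- the PDE for v
    intro x t
    set a : ℝ := x / l + c * t with ha
    set b : ℝ := t / l ^ 2 with hb
    -- first space derivative of v as a function
    have hvx : ∀ x' : ℝ, HasDerivAt (fun x'' => v x'' t) (G b (x' / l + c * t)) x' := by
      intro x'
      have hinner : HasDerivAt (fun x'' : ℝ => x'' / l + c * t) (1 / l) x' := by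
        simpa using ((hasDerivAt_id x').div_const l).add_const (c * t)
      have houter := (hx (x' / l + c * t) b).comp x' hinner
      have h1 : HasDerivAt (fun x'' : ℝ => l * (1 + u (x'' / l + c * t) b) - 1)
          (l * (F (x' / l + c * t, b) (1, 0) * (1 / l))) x' :=
        ((houter.const_add 1).const_mul l).sub_const 1
      have h2 : l * (F (x' / l + c * t, b) (1, 0) * (1 / l)) = G b (x' / l + c * t) := by
        field_simp [hG]
        rfl
      rw [h2] at h1
      rw [hv]
      exact h1
    have hvxfun : (fun x'' => deriv (fun x''' => v x''' t) x'') =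
        fun x'' => G b (x'' / l + c * t) := by
      funext x''; exact (hvx x'').deriv
    -- second space derivative of v
    have hvxx : deriv (fun x' => deriv (fun x'' => v x'' t) x') x =
        deriv (G b) a * (1 / l) := by
      rw [hvxfun]
      have hinner : HasDerivAt (fun x' : ℝ => x' / l + c * t) (1 / l) x := by
        simpa using ((hasDerivAt_id x).div_const l).add_const (c * t)
      exact (((hGd b a).hasDerivAt.comp x hinner)).deriv
    -- time derivative of v
    have hvt : deriv (fun t' => v x t') t =
        l * (c * F (a, b) (1, 0) + (1 / l ^ 2) * F (a, b) (0, 1)) := by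
      have hpath : HasDerivAt (fun t' : ℝ => ((x / l + c * t', t' / l ^ 2) : ℝ × ℝ))
          ((c, 1 / l ^ 2) : ℝ × ℝ) t := by
        have h1 : HasDerivAt (fun t' : ℝ => x / l + c * t') c t := by
          simpa using ((hasDerivAt_id t).const_mul c).const_add (x / l)
        exact h1.prodMk ((hasDerivAt_id t).div_const (l ^ 2))
      have hcomp := (hUd (a, b)).hasFDerivAt.comp_hasDerivAt t hpath
      have hlin : F (a, b) ((c, 1 / l ^ 2) : ℝ × ℝ) =
          c * F (a, b) (1, 0) + (1 / l ^ 2) * F (a, b) (0, 1) := by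
        have h2 : ((c, 1 / l ^ 2) : ℝ × ℝ) =
            c • ((1 : ℝ), (0 : ℝ)) + (1 / l ^ 2) • ((0 : ℝ), (1 : ℝ)) := by
          simp [Prod.ext_iff]
        rw [h2, map_add, map_smul, map_smul, smul_eq_mul, smul_eq_mul]
      have h3 : HasDerivAt (fun t' : ℝ =>
          l * (1 + u (x / l + c * t') (t' / l ^ 2)) - 1)
          (l * (c * F (a, b) (1, 0) + (1 / l ^ 2) * F (a, b) (0, 1))) t := by
        rw [← hlin]
        exact ((hcomp.const_add 1).const_mul l).sub_const 1
      rw [hv]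
      exact h3.deriv
    -- first space derivative of v at x
    have hvxval : deriv (fun x' => v x' t) x = G b a := (hvx x).deriv
    rw [hvxx, hvt, hvxval]
    have key := hpde' a b
    have h1pA : 1 + u a b ≠ 0 := hune a b
    have hvval : v x t = l * (1 + u a b) - 1 := by rw [hv]
    rw [hvval]
    have hGba : G b a = F (a, b) (1, 0) := rfl
    rw [hGba]
    have hlv : 1 + (l * (1 + u a b) - 1) = l * (1 + u a b) := by ring
    have hlvne : l * (1 + u a b) ≠ 0 := mul_ne_zero hl0 h1pA
    -- reduce to algebra
    have hDG : deriv (G b) a =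
        (F (a, b) (0, 1) + (1 - u a b) / (1 + u a b) * F (a, b) (1, 0)) / ν := by
      field_simp at key ⊢
      linarith [key]
    rw [hDG]
    rw [hc] at *
    field_simp
    ring
end

section
/- Let ν > 0 and let u be a solution of the Burgers equation with flux g(u) = 1/(1+u), with 1 + u x t ≠ 0 for all (x,t). Then for every real λ > 0, the function v defined by v x t := λ·(1 + u (x/λ) (t/λ²)) − 1 is smooth, satisfies 1 + v x t ≠ 0 everywhere, and is again a solution of the Burgers equation with flux g(u) = 1/(1+u). (This is the finite transformation generated by B6 = x·∂/∂x + 2t·∂/∂t + (1+u)·∂/∂u.) -/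
/-- Symmetry of the Burgers equation with flux `g(u) = 1/(1+u)` generated by
`B6 = x·∂/∂x + 2t·∂/∂t + (1+u)·∂/∂u`: if `u` is a solution with `1 + u ≠ 0`
everywhere and `λ > 0`, then `v x t = λ·(1 + u (x/λ) (t/λ²)) − 1` satisfies
`1 + v ≠ 0` everywhere and is again a solution. -/
theorem burgers_g6_symmetry
    (ν : ℝ) (hν : 0 < ν)
    (u : ℝ → ℝ → ℝ) (hu : IsBurgersSolution ν (fun s => 1 / (1 + s)) u)
    (hune : ∀ x t : ℝ, 1 + u x t ≠ 0) (l : ℝ) (hl : 0 < l)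
    (v : ℝ → ℝ → ℝ)
    (hv : v = fun x t => l * (1 + u (x / l) (t / l ^ 2)) - 1) :
    (∀ x t : ℝ, 1 + v x t ≠ 0) ∧
      IsBurgersSolution ν (fun s => 1 / (1 + s)) v := by
  obtain ⟨husm, heq⟩ := hu
  have hl0 : l ≠ 0 := ne_of_gt hl
  have hl2 : (l:ℝ)^2 ≠ 0 := pow_ne_zero _ hl0
  subst hv
  have hx : ∀ c : ℝ, ContDiff ℝ (⊤ : ℕ∞) (fun y => u y c) := fun c =>
    husm.comp (contDiff_id.prodMk contDiff_const)
  have ht : ∀ a : ℝ, ContDiff ℝ (⊤ : ℕ∞) (fun s => u a s) := fun a =>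
    husm.comp (contDiff_const.prodMk contDiff_id)
  have hne : ∀ x t : ℝ, 1 + (l * (1 + u (x / l) (t / l ^ 2)) - 1) ≠ 0 := by
    intro x t
    have h1 := hune (x/l) (t/l^2)
    have h2 : l * (1 + u (x/l) (t/l^2)) ≠ 0 := mul_ne_zero hl0 h1
    intro h; apply h2; linarith
  refine ⟨hne, ?_, ?_⟩
  · have h0 : ContDiff ℝ (⊤ : ℕ∞) (fun q : ℝ × ℝ => u (q.1/l) (q.2/l^2)) :=
      husm.comp ((contDiff_fst.div_const l).prodMk (contDiff_snd.div_const (l^2)))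
    exact (contDiff_const.mul (contDiff_const.add h0)).sub contDiff_const
  · intro x t
    set c := t / l^2 with hc
    have key : ∀ x' : ℝ, deriv (fun x'' => l * (1 + u (x''/l) c) - 1) x'
        = deriv (fun y => u y c) (x'/l) := by
      intro x'
      have h1 : HasDerivAt (fun x'' : ℝ => u (x''/l) c)
          (deriv (fun y => u y c) (x'/l) * (1/l)) x' := by
        have := (((hx c).differentiable (by simp) (x'/l)).hasDerivAt).comp x'
          ((hasDerivAt_id x').div_const l)
        simpa [Function.comp_def] using this
      have h2 : HasDerivAt (fun x'' : ℝ => l * (1 + u (x''/l) c) - 1)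
          (l * (deriv (fun y => u y c) (x'/l) * (1/l))) x' :=
        ((h1.const_add 1).const_mul l).sub_const 1
      rw [h2.deriv]; field_simp
    have hux : Differentiable ℝ (deriv (fun y => u y c)) := by
      have hxc : ContDiff ℝ ((⊤ : ℕ∞) : WithTop ℕ∞) (fun y => u y c) :=
        (hx c).of_le (by simp)
      exact ((contDiff_infty_iff_deriv.mp hxc).2).differentiable (by simp)
    have hxx : deriv (fun x' => deriv (fun x'' => l*(1+u (x''/l) c)-1) x') x
        = deriv (deriv (fun y => u y c)) (x/l) * (1/l) := by
      have he : (fun x' => deriv (fun x'' => l*(1+u (x''/l) c)-1) x')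
          = fun x' => deriv (fun y => u y c) (x'/l) := funext key
      rw [he]
      have h1 : HasDerivAt (fun x' : ℝ => deriv (fun y => u y c) (x'/l))
          (deriv (deriv (fun y => u y c)) (x/l) * (1/l)) x := by
        have := ((hux (x/l)).hasDerivAt).comp x ((hasDerivAt_id x).div_const l)
        simpa [Function.comp_def] using this
      exact h1.deriv
    have htt : deriv (fun t' => l*(1+u (x/l) (t'/l^2))-1) t
        = l * (deriv (fun s => u (x/l) s) c * (1/l^2)) := by
      have h1 : HasDerivAt (fun t' : ℝ => u (x/l) (t'/l^2))
          (deriv (fun s => u (x/l) s) c * (1/l^2)) t := by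
        have := (((ht (x/l)).differentiable (by simp) c).hasDerivAt).comp t
          ((hasDerivAt_id t).div_const (l^2))
        simpa [hc, Function.comp_def] using this
      exact (((h1.const_add 1).const_mul l).sub_const 1).deriv
    have hEq := heq (x/l) c
    have hU := hune (x/l) c
    simp only []
    rw [hxx, htt, key x]
    have hden : 1 + (l * (1 + u (x/l) c) - 1) = l * (1 + u (x/l) c) := by ring
    have hL : l * (1 + u (x/l) c) ≠ 0 := mul_ne_zero hl0 hU
    rw [hden]
    have hEq' : ν * deriv (deriv (fun y => u y c)) (x/l)
        = deriv (fun t' => u (x/l) t') c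
          + 1 / (1 + u (x/l) c) * deriv (fun x' => u x' c) (x/l) := by
      simpa using hEq
    field_simp
    field_simp at hEq'
    linear_combination hEq'
end

section
/- Let ν > 0 and let u be a solution of the Burgers equation with flux g(u) = u/(1+u), with 1 + u x t ≠ 0 for all (x,t). Then for every real λ > 0, the function v defined by v x t := λ·(1 + u (x/λ + (1/λ² − 1/λ)·t) (t/λ²)) − 1 is smooth, satisfies 1 + v x t ≠ 0 everywhere, and is again a solution of the Burgers equation with flux g(u) = u/(1+u). (This is the finite transformation generated by B7 = (x+t)·∂/∂x + 2t·∂/∂t + (1+u)·∂/∂u.) -/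
lemma fd_pair (f : ℝ × ℝ →L[ℝ] ℝ) (a b : ℝ) : f (a, b) = a * f (1,0) + b * f (0,1) := by
  have h : ((a, b) : ℝ × ℝ) = a • ((1:ℝ),(0:ℝ)) + b • ((0:ℝ),(1:ℝ)) := by simp
  rw [h, map_add, f.map_smul, f.map_smul, smul_eq_mul, smul_eq_mul]

lemma pdx_hasDeriv (H : ℝ × ℝ → ℝ) (hH : Differentiable ℝ H) (x t : ℝ) :
    HasDerivAt (fun x' => H (x', t)) (fderiv ℝ H (x,t) (1,0)) x :=
  (hH (x,t)).hasFDerivAt.comp_hasDerivAt x ((hasDerivAt_id x).prodMk (hasDerivAt_const x t))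

lemma pdt_hasDeriv (H : ℝ × ℝ → ℝ) (hH : Differentiable ℝ H) (x t : ℝ) :
    HasDerivAt (fun t' => H (x, t')) (fderiv ℝ H (x,t) (0,1)) t :=
  (hH (x,t)).hasFDerivAt.comp_hasDerivAt t ((hasDerivAt_const t x).prodMk (hasDerivAt_id t))

/-- Symmetry of the Burgers equation with flux `g(u) = u/(1+u)` generated by
`B7 = (x+t)·∂/∂x + 2t·∂/∂t + (1+u)·∂/∂u`: if `u` is a solution with
`1 + u ≠ 0` everywhere and `λ > 0`, then
`v x t = λ·(1 + u (x/λ + (1/λ² − 1/λ)·t) (t/λ²)) − 1` satisfies `1 + v ≠ 0`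
everywhere and is again a solution. -/
theorem burgers_g7_symmetry
    (ν : ℝ) (hν : 0 < ν)
    (u : ℝ → ℝ → ℝ) (hu : IsBurgersSolution ν (fun s => s / (1 + s)) u)
    (hune : ∀ x t : ℝ, 1 + u x t ≠ 0) (l : ℝ) (hl : 0 < l)
    (v : ℝ → ℝ → ℝ)
    (hv : v = fun x t =>
      l * (1 + u (x / l + (1 / l ^ 2 - 1 / l) * t) (t / l ^ 2)) - 1) :
    (∀ x t : ℝ, 1 + v x t ≠ 0) ∧
      IsBurgersSolution ν (fun s => s / (1 + s)) v := by
  obtain ⟨hF, heq⟩ := hu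
  subst hv
  have hl0 : l ≠ 0 := hl.ne'
  set F : ℝ × ℝ → ℝ := fun q => u q.1 q.2 with hFdef
  have hFd : Differentiable ℝ F := hF.differentiable (by simp)
  set G : ℝ × ℝ → ℝ := fun q => fderiv ℝ F q (1,0) with hGdef
  have hGc : ContDiff ℝ (⊤ : ℕ∞) G := by
    have h1 : ContDiff ℝ (⊤ : ℕ∞) (fderiv ℝ F) := hF.fderiv_right (by simp)
    exact (ContinuousLinearMap.apply ℝ ℝ ((1:ℝ),(0:ℝ))).contDiff.comp h1
  have hGd : Differentiable ℝ G := hGc.differentiable (by simp)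
  set c : ℝ := 1 / l ^ 2 - 1 / l with hcdef
  -- u's equation in fderiv form
  have hu2 : ∀ x t : ℝ, ν * fderiv ℝ G (x, t) (1,0) =
      fderiv ℝ F (x, t) (0,1) + (F (x, t) / (1 + F (x, t))) * G (x, t) := by
    intro x t
    have h := heq x t
    have h1 : (fun x' => deriv (fun x'' => u x'' t) x') = fun x' => G (x', t) := by
      funext x'
      exact (pdx_hasDeriv F hFd x' t).deriv
    rw [h1, (pdx_hasDeriv G hGd x t).deriv, (pdt_hasDeriv F hFd x t).deriv,
      (pdx_hasDeriv F hFd x t).deriv] at h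
    exact h
  constructor
  · intro x t
    have h : (1 : ℝ) + (l * (1 + u (x / l + c * t) (t / l ^ 2)) - 1)
        = l * (1 + u (x / l + c * t) (t / l ^ 2)) := by ring
    rw [h]
    exact mul_ne_zero hl0 (hune _ _)
  constructor
  · -- smoothness
    have hL : ContDiff ℝ (⊤ : ℕ∞) (fun q : ℝ × ℝ => (q.1 / l + c * q.2, q.2 / l ^ 2)) :=
      ((contDiff_fst.div_const l).add (contDiff_const.mul contDiff_snd)).prodMk
        (contDiff_snd.div_const (l ^ 2))
    exact (contDiff_const.mul (contDiff_const.add (hF.comp hL))).sub contDiff_const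
  · intro x t
    -- spatial derivative of v at any point x', time t
    have hvx : ∀ x' : ℝ, HasDerivAt
        (fun s => l * (1 + u (s / l + c * t) (t / l ^ 2)) - 1)
        (l * fderiv ℝ F (x' / l + c * t, t / l ^ 2) (1/l, 0)) x' := by
      intro x'
      have hγ : HasDerivAt (fun s : ℝ => (s / l + c * t, t / l ^ 2)) ((1/l : ℝ), (0:ℝ)) x' :=
        (((hasDerivAt_id x').div_const l).add_const (c * t)).prodMk (hasDerivAt_const x' (t / l ^ 2))
      exact ((((hFd _).hasFDerivAt.comp_hasDerivAt x' hγ).const_add 1).const_mul l).sub_const 1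
    -- inner derivative function
    have hinner : (fun x' => deriv (fun x'' =>
        l * (1 + u (x'' / l + c * t) (t / l ^ 2)) - 1) x')
        = fun x' => l * ((1/l) * G (x' / l + c * t, t / l ^ 2)) := by
      funext x'
      rw [(hvx x').deriv, fd_pair]
      simp
      exact Or.inl rfl
    -- second spatial derivative
    have hvxx : HasDerivAt (fun x' => l * ((1/l) * G (x' / l + c * t, t / l ^ 2)))
        (l * ((1/l) * fderiv ℝ G (x / l + c * t, t / l ^ 2) (1/l, 0))) x := by
      have hγ : HasDerivAt (fun s : ℝ => (s / l + c * t, t / l ^ 2)) ((1/l : ℝ), (0:ℝ)) x :=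
        (((hasDerivAt_id x).div_const l).add_const (c * t)).prodMk (hasDerivAt_const x (t / l ^ 2))
      exact (((hGd _).hasFDerivAt.comp_hasDerivAt x hγ).const_mul (1/l)).const_mul l
    -- time derivative
    have hvt : HasDerivAt (fun t' => l * (1 + u (x / l + c * t') (t' / l ^ 2)) - 1)
        (l * fderiv ℝ F (x / l + c * t, t / l ^ 2) (c, 1/l^2)) t := by
      have hc1 : HasDerivAt (fun t' : ℝ => c * t') c t := by
        simpa using (hasDerivAt_id t).const_mul c
      have hγ : HasDerivAt (fun t' : ℝ => (x / l + c * t', t' / l ^ 2)) ((c : ℝ), (1/l^2 : ℝ)) t :=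
        (hc1.const_add (x / l)).prodMk ((hasDerivAt_id t).div_const (l ^ 2))
      exact ((((hFd _).hasFDerivAt.comp_hasDerivAt t hγ).const_add 1).const_mul l).sub_const 1
    rw [hinner, hvxx.deriv, hvt.deriv, (hvx x).deriv]
    set p : ℝ × ℝ := (x / l + c * t, t / l ^ 2) with hpdef
    beta_reduce
    have hU : u (x / l + c * t) (t / l ^ 2) = F p := rfl
    rw [hU]
    have hC := hu2 (x / l + c * t) (t / l ^ 2)
    rw [fd_pair (fderiv ℝ G p), fd_pair (fderiv ℝ F p) c, fd_pair (fderiv ℝ F p) (1/l) 0]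
    set A : ℝ := G p
    set B : ℝ := fderiv ℝ F p (0,1)
    set C : ℝ := fderiv ℝ G p (1,0)
    set D : ℝ := fderiv ℝ G p (0,1)
    set U : ℝ := F p
    have hUne : 1 + U ≠ 0 := hune _ _
    have hVne : 1 + (l * (1 + U) - 1) ≠ 0 := by
      have h : (1 : ℝ) + (l * (1 + U) - 1) = l * (1 + U) := by ring
      rw [h]; exact mul_ne_zero hl0 hUne
    have hA : fderiv ℝ F p (1,0) = A := rfl
    rw [hA]
    have hC' : ν * C * (1 + U) = B * (1 + U) + U * A := by
      have h := hC
      field_simp at h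
      linarith [h]
    rw [hcdef]
    field_simp
    linear_combination l * hC'
end
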